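/- Let a, σ > 0 and define the aℤ-aliased Gaussian density g on ℝ by g(x) = ∑_{k∈ℤ} f_σ(x − ka) for x ∈ [−a/2, a/2) and g(x) = 0 otherwise. Then the total variation distance satisfies 𝕍(f_σ, g) ≤ 2·exp(−a²/(8σ²)). -/

import Mathlib

open Real MeasureTheory Set
open scoped ENNReal

/-- The Gaussian density with standard deviation `σ` and mean `c`. -/
noncomputable def gauss (σ c x : ℝ) : ℝ :=
  (1 / (Real.sqrt (2 * Real.pi) * σ)) * Real.exp (-(x - c) ^ 2 / (2 * σ ^ 2))


lemma gauss_eq_pdf {σ : ℝ} (hσ : 0 < σ) (c : ℝ) :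
    gauss σ c = ProbabilityTheory.gaussianPDFReal c ⟨σ ^ 2, sq_nonneg σ⟩ := by
  ext x
  simp only [gauss, ProbabilityTheory.gaussianPDFReal, NNReal.coe_mk]
  have h : Real.sqrt (2 * π * σ ^ 2) = √2 * √π * σ := by
    rw [Real.sqrt_mul (by positivity), Real.sqrt_mul (by positivity), Real.sqrt_sq hσ.le]
  change 1 / (√(2 * π) * σ) * rexp (-(x - c) ^ 2 / (2 * σ ^ 2)) =
    (√(2 * π * σ ^ 2))⁻¹ * rexp (-(x - c) ^ 2 / (2 * σ ^ 2))
  rw [h, one_div, Real.sqrt_mul (by positivity : (0:ℝ) ≤ 2)]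

lemma gauss_nonneg {σ : ℝ} (hσ : 0 < σ) (c x : ℝ) : 0 ≤ gauss σ c x := by
  rw [gauss_eq_pdf hσ]; exact ProbabilityTheory.gaussianPDFReal_nonneg _ _ _

lemma gauss_measurable {σ : ℝ} (hσ : 0 < σ) (c : ℝ) : Measurable (gauss σ c) := by
  rw [gauss_eq_pdf hσ]; exact ProbabilityTheory.measurable_gaussianPDFReal _ _

lemma gauss_integrable {σ : ℝ} (hσ : 0 < σ) (c : ℝ) : Integrable (gauss σ c) := by
  rw [gauss_eq_pdf hσ]; exact ProbabilityTheory.integrable_gaussianPDFReal _ _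

lemma gauss_integral {σ : ℝ} (hσ : 0 < σ) (c : ℝ) : ∫ x, gauss σ c x = 1 := by
  rw [gauss_eq_pdf hσ]
  exact ProbabilityTheory.integral_gaussianPDFReal_eq_one c
    (by simp [← NNReal.coe_inj, hσ.ne'] : (⟨σ ^ 2, sq_nonneg σ⟩ : NNReal) ≠ 0)

lemma gauss_lintegral {σ : ℝ} (hσ : 0 < σ) (c : ℝ) :
    ∫⁻ x, ENNReal.ofReal (gauss σ c x) = 1 := by
  rw [← ofReal_integral_eq_lintegral_ofReal (gauss_integrable hσ c)
    (ae_of_all _ (gauss_nonneg hσ c)), gauss_integral hσ c, ENNReal.ofReal_one]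

lemma gauss_mul_exp {σ : ℝ} (hσ : 0 < σ) (b x : ℝ) :
    gauss σ 0 x * rexp (b * x) = rexp (b ^ 2 * σ ^ 2 / 2) * gauss σ (b * σ ^ 2) x := by
  simp only [gauss, sub_zero]
  rw [mul_assoc, ← Real.exp_add, mul_comm (rexp _), mul_assoc, ← Real.exp_add]
  congr 1
  have : (σ : ℝ) ^ 2 ≠ 0 := by positivity
  field_simp
  ring


lemma gauss_summable {σ a : ℝ} (hσ : 0 < σ) (ha : 0 < a) (x : ℝ) :
    Summable fun k : ℤ => gauss σ 0 (x - k * a) := by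
  set C : ℝ := 1 / (Real.sqrt (2 * π) * σ) with hC
  have hC0 : 0 ≤ C := by positivity
  set T : ℝ := a ^ 2 / (2 * π * σ ^ 2) with hT
  have hT0 : 0 < T := by positivity
  set S : ℝ := a * |x| / (2 * π * σ ^ 2) with hS
  have hbd := (summable_pow_mul_jacobiTheta₂_term_bound S hT0 0).mul_left C
  refine hbd.of_nonneg_of_le (fun k => by unfold gauss; positivity) (fun k => ?_)
  simp only [gauss, sub_zero, pow_zero, one_mul]
  refine mul_le_mul_of_nonneg_left (Real.exp_le_exp.2 ?_) hC0
  have hπ : (0:ℝ) < π := Real.pi_pos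
  have hσ2 : (0:ℝ) < σ ^ 2 := by positivity
  have hkey : -π * (T * (k:ℝ) ^ 2 - 2 * S * |(k:ℝ)|)
      = -((a * k) ^ 2 - 2 * (a * |x|) * |(k:ℝ)|) / (2 * σ ^ 2) := by
    rw [hT, hS]; field_simp
  rw [Int.cast_abs, hkey]
  have h1 : x * ((k:ℝ) * a) ≤ |x| * |(k:ℝ)| * a := by
    have := le_abs_self (x * (k:ℝ))
    rw [abs_mul] at this
    nlinarith
  have h2 : (0:ℝ) ≤ x ^ 2 := sq_nonneg x
  apply div_le_div_of_nonneg_right ?_ (by positivity)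
  nlinarith [h1, h2]


lemma wrapped_lintegral_le {σ a : ℝ} (hσ : 0 < σ) (ha : 0 < a) :
    ∫⁻ x in Set.Ico (-(a/2)) (a/2), ∑' k : ℤ, ENNReal.ofReal (gauss σ 0 (x - k * a)) ≤ 1 := by
  have hmeas : ∀ k : ℤ, Measurable fun x => ENNReal.ofReal (gauss σ 0 (x - k * a)) :=
    fun k => ((gauss_measurable hσ 0).comp (measurable_id.sub_const _)).ennreal_ofReal
  rw [lintegral_tsum fun k => (hmeas k).aemeasurable]
  set A : ℤ → Set ℝ := fun j => Set.Ico (-(a/2) + j • a) (-(a/2) + (j+1) • a) with hA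
  have hterm : ∀ k : ℤ, (∫⁻ x in Set.Ico (-(a/2)) (a/2), ENNReal.ofReal (gauss σ 0 (x - k * a)))
      = ∫⁻ y in A (-k), ENNReal.ofReal (gauss σ 0 y) := by
    intro k
    have hmp : MeasurePreserving (fun x : ℝ => x + -((k:ℝ) * a)) volume volume :=
      measurePreserving_add_right volume _
    have hemb : MeasurableEmbedding (fun x : ℝ => x + -((k:ℝ) * a)) :=
      (MeasurableEquiv.addRight (-((k:ℝ) * a))).measurableEmbedding
    have hpre : (fun x : ℝ => x + -((k:ℝ) * a)) ⁻¹' (A (-k)) = Set.Ico (-(a/2)) (a/2) := by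
      ext y
      simp only [hA, Set.mem_preimage, Set.mem_Ico, zsmul_eq_mul]
      push_cast
      constructor <;> intro h <;> exact ⟨by linarith [h.1], by linarith [h.2]⟩
    simp_rw [sub_eq_add_neg]
    rw [← hpre, hmp.setLIntegral_comp_preimage_emb hemb (fun y => ENNReal.ofReal (gauss σ 0 y))]
  simp_rw [hterm]
  calc ∑' k : ℤ, ∫⁻ y in A (-k), ENNReal.ofReal (gauss σ 0 y)
      = ∑' j : ℤ, ∫⁻ y in A j, ENNReal.ofReal (gauss σ 0 y) := by
        simpa using (Equiv.neg ℤ).tsum_eq fun j => ∫⁻ y in A j, ENNReal.ofReal (gauss σ 0 y)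
    _ = ∫⁻ y in ⋃ j, A j, ENNReal.ofReal (gauss σ 0 y) :=
        (lintegral_iUnion (fun j => measurableSet_Ico)
          (pairwise_disjoint_Ico_add_zsmul (-(a/2)) a) _).symm
    _ = 1 := by rw [iUnion_Ico_add_zsmul ha, Measure.restrict_univ, gauss_lintegral hσ 0]
    _ ≤ 1 := le_rfl


lemma gauss_tail {σ a : ℝ} (hσ : 0 < σ) (ha : 0 < a) :
    ∫⁻ x in (Set.Ico (-(a/2)) (a/2))ᶜ, ENNReal.ofReal (gauss σ 0 x)
      ≤ ENNReal.ofReal (2 * rexp (-(a ^ 2 / (8 * σ ^ 2)))) := by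
  set b : ℝ := a / (2 * σ ^ 2) with hb
  have hb0 : 0 < b := by positivity
  set h : ℝ → ℝ := fun x =>
    rexp (-(b * (a/2))) * (rexp (b ^ 2 * σ ^ 2 / 2) * gauss σ (b * σ ^ 2) x
      + rexp (b ^ 2 * σ ^ 2 / 2) * gauss σ (-(b * σ ^ 2)) x) with hh
  have hint : Integrable h := by
    apply Integrable.const_mul
    exact ((gauss_integrable hσ (b * σ ^ 2)).const_mul _).add
      ((gauss_integrable hσ (-(b * σ ^ 2))).const_mul _)
  have hpt : ∀ x ∈ (Set.Ico (-(a/2)) (a/2))ᶜ, gauss σ 0 x ≤ h x := by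
    intro x hx
    have hx1 : rexp (b ^ 2 * σ ^ 2 / 2) * gauss σ (b * σ ^ 2) x
        = gauss σ 0 x * rexp (b * x) := (gauss_mul_exp hσ b x).symm
    have hx2 : rexp (b ^ 2 * σ ^ 2 / 2) * gauss σ (-(b * σ ^ 2)) x
        = gauss σ 0 x * rexp (-(b * x)) := by
      have := (gauss_mul_exp hσ (-b) x).symm
      rw [show (-b) ^ 2 = b ^ 2 by ring, show -b * σ ^ 2 = -(b * σ ^ 2) by ring,
        show -b * x = -(b * x) by ring] at this
      exact this
    have hg0 : 0 ≤ gauss σ 0 x := gauss_nonneg hσ 0 x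
    have key : 1 ≤ rexp (-(b * (a/2))) * (rexp (b * x) + rexp (-(b * x))) := by
      have habs : a / 2 ≤ |x| := by
        simp only [Set.mem_compl_iff, Set.mem_Ico, not_and_or, not_le, not_lt] at hx
        rcases hx with hx | hx
        · rw [abs_of_nonpos (by linarith)]; linarith
        · rw [abs_of_nonneg (by linarith)]; linarith
      have h1 : rexp (-(b * (a/2))) * rexp (b * |x|) = rexp (b * (|x| - a/2)) := by
        rw [← Real.exp_add]; ring_nf
      have h2 : (1:ℝ) ≤ rexp (b * (|x| - a/2)) :=
        Real.one_le_exp (by nlinarith)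
      have h3 : rexp (b * |x|) ≤ rexp (b * x) + rexp (-(b * x)) := by
        rcases abs_cases x with ⟨hc, _⟩ | ⟨hc, _⟩
        · rw [hc]; nlinarith [Real.exp_pos (-(b * x))]
        · have hE : rexp (b * |x|) = rexp (-(b * x)) := by rw [hc]; ring_nf
          rw [hE]; nlinarith [Real.exp_pos (b * x)]
      nlinarith [Real.exp_pos (-(b * (a/2))), h1, h2, h3]
    rw [hh]
    simp only [hx1, hx2]
    nlinarith [key, hg0]
  have hnn : ∀ x, 0 ≤ h x := by
    intro x
    have := gauss_nonneg hσ (b * σ ^ 2) x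
    have := gauss_nonneg hσ (-(b * σ ^ 2)) x
    rw [hh]
    positivity
  calc ∫⁻ x in (Set.Ico (-(a/2)) (a/2))ᶜ, ENNReal.ofReal (gauss σ 0 x)
      ≤ ∫⁻ x in (Set.Ico (-(a/2)) (a/2))ᶜ, ENNReal.ofReal (h x) :=
        setLIntegral_mono' measurableSet_Ico.compl
          (fun x hx => ENNReal.ofReal_le_ofReal (hpt x hx))
    _ ≤ ∫⁻ x, ENNReal.ofReal (h x) := setLIntegral_le_lintegral _ _
    _ = ENNReal.ofReal (∫ x, h x) :=
        (ofReal_integral_eq_lintegral_ofReal hint (ae_of_all _ hnn)).symm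
    _ ≤ ENNReal.ofReal (2 * rexp (-(a ^ 2 / (8 * σ ^ 2)))) := by
        apply ENNReal.ofReal_le_ofReal
        rw [hh]
        rw [integral_const_mul, integral_add ((gauss_integrable hσ _).const_mul _)
          ((gauss_integrable hσ _).const_mul _), integral_const_mul, integral_const_mul,
          gauss_integral hσ, gauss_integral hσ]
        have hexp : -(b * (a/2)) + b ^ 2 * σ ^ 2 / 2 = -(a ^ 2 / (8 * σ ^ 2)) := by
          rw [hb]; field_simp; ring
        calc rexp (-(b * (a/2))) * (rexp (b ^ 2 * σ ^ 2 / 2) * 1 + rexp (b ^ 2 * σ ^ 2 / 2) * 1)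
            = 2 * rexp (-(b * (a/2)) + b ^ 2 * σ ^ 2 / 2) := by rw [Real.exp_add]; ring
          _ = 2 * rexp (-(a ^ 2 / (8 * σ ^ 2))) := by rw [hexp]
          _ ≤ 2 * rexp (-(a ^ 2 / (8 * σ ^ 2))) := le_rfl

/-- the TV distance between the Gaussian density `f_σ` and the
`aℤ`-aliased Gaussian density (supported on `[−a/2, a/2)`) is at most
`2·exp(−a²/(8σ²))`. -/

theorem stmt10 (a σ : ℝ) (ha : 0 < a) (hσ : 0 < σ) :
    (1 / 2) * ∫ x : ℝ,
        |gauss σ 0 x -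
          (if x ∈ Set.Ico (-(a / 2)) (a / 2) then ∑' k : ℤ, gauss σ 0 (x - k * a) else 0)|
      ≤ 2 * Real.exp (-(a ^ 2 / (8 * σ ^ 2))) := by
  set I : Set ℝ := Set.Ico (-(a / 2)) (a / 2) with hI
  set S : ℝ → ℝ := fun x => ∑' k : ℤ, gauss σ 0 (x - k * a) with hS
  set g : ℝ → ℝ := fun x => if x ∈ I then S x else 0 with hg
  set F : ℝ → ℝ≥0∞ := fun x => ENNReal.ofReal (gauss σ 0 x) with hF
  set T : ℝ → ℝ≥0∞ := fun x => ∑' k : ℤ, ENNReal.ofReal (gauss σ 0 (x - k * a)) with hT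
  have hFk : ∀ k : ℤ, Measurable fun x : ℝ => ENNReal.ofReal (gauss σ 0 (x - k * a)) :=
    fun k => ((gauss_measurable hσ 0).comp (measurable_id.sub_const _)).ennreal_ofReal
  have hTmeas : Measurable T := Measurable.ennreal_tsum hFk
  have hofS : ∀ x, ENNReal.ofReal (S x) = T x := fun x =>
    ENNReal.ofReal_tsum_of_nonneg (fun k => gauss_nonneg hσ 0 _) (gauss_summable hσ ha x)
  have hSnn : ∀ x, 0 ≤ S x := fun x => tsum_nonneg fun k => gauss_nonneg hσ 0 _
  have hSmeas : Measurable S := by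
    have : S = fun x => (T x).toReal := by
      funext x; rw [← hofS x, ENNReal.toReal_ofReal (hSnn x)]
    rw [this]; exact hTmeas.ennreal_toReal
  have hgmeas : Measurable g := by
    have : g = I.indicator S := by funext x; simp [hg, Set.indicator_apply]
    rw [this]; exact hSmeas.indicator measurableSet_Ico
  have habs : Measurable fun x => |gauss σ 0 x - g x| :=
    ((gauss_measurable hσ 0).sub hgmeas).abs
  have hIm : MeasurableSet I := measurableSet_Ico
  -- pointwise identifications
  have hle : ∀ x, gauss σ 0 x ≤ S x := by
    intro x
    have h0 : gauss σ 0 (x - (0:ℤ) * a) = gauss σ 0 x := by norm_num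
    calc gauss σ 0 x = gauss σ 0 (x - (0:ℤ) * a) := h0.symm
      _ ≤ S x := Summable.le_tsum (gauss_summable hσ ha x) 0 fun j _ => gauss_nonneg hσ 0 _
  have hFleT : ∀ x, F x ≤ T x := by
    intro x
    have h0 : ENNReal.ofReal (gauss σ 0 (x - (0:ℤ) * a)) = F x := by norm_num [hF]
    calc F x = ENNReal.ofReal (gauss σ 0 (x - (0:ℤ) * a)) := h0.symm
      _ ≤ T x := ENNReal.le_tsum 0
  have hIfin : ∫⁻ x in I, F x ≠ ∞ := by
    refine ne_top_of_le_ne_top (by simp : (1:ℝ≥0∞) ≠ ∞) ?_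
    rw [← gauss_lintegral hσ 0]
    exact setLIntegral_le_lintegral _ _
  -- the lintegral bound
  have hsplit : (∫⁻ x in I, F x) + ∫⁻ x in Iᶜ, F x = 1 := by
    rw [lintegral_add_compl F hIm, gauss_lintegral hσ 0]
  have honI : ∫⁻ x in I, ENNReal.ofReal |gauss σ 0 x - g x| = ∫⁻ x in I, (T x - F x) := by
    refine setLIntegral_congr_fun hIm (fun x hx => ?_)
    have : g x = S x := if_pos hx
    rw [this, abs_of_nonpos (by linarith [hle x]), neg_sub,
      ENNReal.ofReal_sub _ (gauss_nonneg hσ 0 x), hofS x]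
  have honIc : ∫⁻ x in Iᶜ, ENNReal.ofReal |gauss σ 0 x - g x| = ∫⁻ x in Iᶜ, F x := by
    refine setLIntegral_congr_fun hIm.compl (fun x hx => ?_)
    have : g x = 0 := if_neg hx
    rw [this, sub_zero, abs_of_nonneg (gauss_nonneg hσ 0 x)]
  have hsub : ∫⁻ x in I, (T x - F x) = (∫⁻ x in I, T x) - ∫⁻ x in I, F x :=
    lintegral_sub ((gauss_measurable hσ 0).ennreal_ofReal) hIfin
      (ae_of_all _ fun x => hFleT x)
  have hIbound : ∫⁻ x in I, (T x - F x) ≤ ∫⁻ x in Iᶜ, F x := by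
    rw [hsub]
    calc (∫⁻ x in I, T x) - ∫⁻ x in I, F x ≤ 1 - ∫⁻ x in I, F x :=
          tsub_le_tsub_right (wrapped_lintegral_le hσ ha) _
      _ = ∫⁻ x in Iᶜ, F x := by
          rw [← hsplit, ENNReal.add_sub_cancel_left hIfin]
  have hmain : ∫⁻ x, ENNReal.ofReal |gauss σ 0 x - g x|
      ≤ ENNReal.ofReal (4 * rexp (-(a ^ 2 / (8 * σ ^ 2)))) := by
    rw [← lintegral_add_compl (fun x => ENNReal.ofReal |gauss σ 0 x - g x|) hIm]
    calc (∫⁻ x in I, ENNReal.ofReal |gauss σ 0 x - g x|)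
          + ∫⁻ x in Iᶜ, ENNReal.ofReal |gauss σ 0 x - g x|
        ≤ (∫⁻ x in Iᶜ, F x) + ∫⁻ x in Iᶜ, F x := by
          rw [honI, honIc]; exact add_le_add hIbound le_rfl
      _ ≤ ENNReal.ofReal (2 * rexp (-(a ^ 2 / (8 * σ ^ 2))))
          + ENNReal.ofReal (2 * rexp (-(a ^ 2 / (8 * σ ^ 2)))) :=
          add_le_add (gauss_tail hσ ha) (gauss_tail hσ ha)
      _ = ENNReal.ofReal (4 * rexp (-(a ^ 2 / (8 * σ ^ 2)))) := by
          rw [← ENNReal.ofReal_add (by positivity) (by positivity)]; ring_nf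
  -- pass to the Bochner integral
  have hint_eq : ∫ x : ℝ, |gauss σ 0 x - g x|
      = (∫⁻ x, ENNReal.ofReal |gauss σ 0 x - g x|).toReal := by
    rw [integral_eq_lintegral_of_nonneg_ae (ae_of_all _ fun x => abs_nonneg _)
      habs.aestronglyMeasurable]
  have hfinal : ∫ x : ℝ, |gauss σ 0 x - g x| ≤ 4 * rexp (-(a ^ 2 / (8 * σ ^ 2))) := by
    rw [hint_eq]
    exact ENNReal.toReal_le_of_le_ofReal (by positivity) hmain
  have : (1/2 : ℝ) * ∫ x : ℝ, |gauss σ 0 x - g x| ≤ 2 * rexp (-(a ^ 2 / (8 * σ ^ 2))) := by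
    linarith
  simpa [hg, hS, hI] using this
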